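/- arXiv:math-ph/0703050 — 3 statements merged into one kernel-verified Lean document; each statement's English description precedes it below -/
import Mathlib

section
/- Let ζ ∈ ℂ and let U₁,V₁,U₂,V₂ ∈ ℂ[z₁,z₂] be polynomials with deg Uμ < deg Vμ (μ = 1,2), defining the rational lensing map f₁ = ζ + U₁/V₁, f₂ = conj(ζ) + U₂/V₂ on {V₁ ≠ 0, V₂ ≠ 0} ⊂ ℂ². Let hUμ, hVμ ∈ ℂ[Z₀,Z₁,Z₂] denote the homogenizations of Uμ, Vμ (so hUμ(1,z₁,z₂) = Uμ(z₁,z₂), hVμ(1,z₁,z₂) = Vμ(z₁,z₂), with hUμ homogeneous of degree deg Uμ and hVμ of degree deg Vμ), set eμ = deg Vμ − deg Uμ + 1 ≥ 2, and define the homogeneous polynomial map G : ℂ³ → ℂ³ by G₀ = Z₀·hV₁·hV₂, G₁ = ζ·Z₀·hV₁·hV₂ + Z₀^{e₁}·hU₁·hV₂, G₂ = conj(ζ)·Z₀·hV₁·hV₂ + Z₀^{e₂}·hU₂·hV₁ (the denominator-cleared form of the projective lensing map F on ℂP²). Then: (i) for every Z = (Z₀,Z₁,Z₂) ∈ ℂ³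 \ {0} with Z₀ = 0 one has G(Z) = 0, so there is no λ ∈ ℂ \ {0} with G(Z) = λ·Z; hence F has no fixed points on the line at infinity; and (ii) a point (z₁,z₂) with V₁(z₁,z₂)·V₂(z₁,z₂) ≠ 0 satisfies G(1,z₁,z₂) = λ·(1,z₁,z₂) for some λ ≠ 0 if and only if f(z₁,z₂) = (z₁,z₂). Consequently Fix(F) = Fix(f). -/
open scoped BigOperators

/-- **Lemma 3 of the paper: `Fix(F) = Fix(f)`.**
Let `f₁ = ζ + U₁/V₁`, `f₂ = conj ζ + U₂/V₂` be a rational lensing map with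
`deg Uμ < deg Vμ`, and let `hUμ, hVμ` be the homogenizations of `Uμ, Vμ` in the
extra variable `Z₀`.  The denominator-cleared form `G : ℂ³ → ℂ³` of the induced
projective lensing map `F` on `ℂP²` is
`G₀ = Z₀·hV₁·hV₂`, `G₁ = ζ·Z₀·hV₁·hV₂ + Z₀^{e₁}·hU₁·hV₂`,
`G₂ = conj ζ·Z₀·hV₁·hV₂ + Z₀^{e₂}·hU₂·hV₁` with `eμ = deg Vμ − deg Uμ + 1`.
Then (i) `G` vanishes on the line at infinity `Z₀ = 0`, so `F` has no fixed
points there, and (ii) on the affine chart `Z₀ = 1` (where `V₁·V₂ ≠ 0`) the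
projective fixed points of `F` are exactly the fixed points of `f`. -/
theorem projective_lensing_fixed_points
    (ζ : ℂ) (U V : Fin 2 → MvPolynomial (Fin 2) ℂ)
    (hdeg : ∀ μ : Fin 2, (U μ).totalDegree < (V μ).totalDegree)
    (hU hV : Fin 2 → MvPolynomial (Fin 3) ℂ)
    (hUhom : ∀ μ : Fin 2, (hU μ).IsHomogeneous ((U μ).totalDegree))
    (hVhom : ∀ μ : Fin 2, (hV μ).IsHomogeneous ((V μ).totalDegree))
    (hUaff : ∀ (μ : Fin 2) (z : Fin 2 → ℂ),
      MvPolynomial.eval ![1, z 0, z 1] (hU μ) = MvPolynomial.eval z (U μ))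
    (hVaff : ∀ (μ : Fin 2) (z : Fin 2 → ℂ),
      MvPolynomial.eval ![1, z 0, z 1] (hV μ) = MvPolynomial.eval z (V μ))
    (e : Fin 2 → ℕ) (he : ∀ μ : Fin 2, e μ = (V μ).totalDegree - (U μ).totalDegree + 1)
    (G : (Fin 3 → ℂ) → (Fin 3 → ℂ))
    (hG : ∀ Z : Fin 3 → ℂ, G Z =
      ![Z 0 * MvPolynomial.eval Z (hV 0) * MvPolynomial.eval Z (hV 1),
        ζ * Z 0 * MvPolynomial.eval Z (hV 0) * MvPolynomial.eval Z (hV 1) +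
          Z 0 ^ (e 0) * MvPolynomial.eval Z (hU 0) * MvPolynomial.eval Z (hV 1),
        (starRingEnd ℂ) ζ * Z 0 * MvPolynomial.eval Z (hV 0) * MvPolynomial.eval Z (hV 1) +
          Z 0 ^ (e 1) * MvPolynomial.eval Z (hU 1) * MvPolynomial.eval Z (hV 0)]) :
    -- (i) no fixed points on the line at infinity:
    (∀ Z : Fin 3 → ℂ, Z ≠ 0 → Z 0 = 0 →
      G Z = 0 ∧ ¬ ∃ lam : ℂ, lam ≠ 0 ∧ G Z = lam • Z) ∧
    -- (ii) in the affine chart the fixed points of `F` are those of `f`: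
    (∀ z : Fin 2 → ℂ, MvPolynomial.eval z (V 0) * MvPolynomial.eval z (V 1) ≠ 0 →
      ((∃ lam : ℂ, lam ≠ 0 ∧ G ![1, z 0, z 1] = lam • ![1, z 0, z 1]) ↔
        (ζ + MvPolynomial.eval z (U 0) / MvPolynomial.eval z (V 0) = z 0 ∧
          (starRingEnd ℂ) ζ + MvPolynomial.eval z (U 1) / MvPolynomial.eval z (V 1) = z 1))) := by

  have he0 : e 0 ≠ 0 := by rw [he]; omega
  have he1 : e 1 ≠ 0 := by rw [he]; omega
  constructor
  · intro Z hZ hZ0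
    have hGZ : G Z = 0 := by
      rw [hG]
      funext i
      fin_cases i <;> simp [hZ0, zero_pow he0, zero_pow he1]
    refine ⟨hGZ, ?_⟩
    rintro ⟨lam, hlam, hEq⟩
    rw [hGZ] at hEq
    rcases smul_eq_zero.mp hEq.symm with h | h
    · exact hlam h
    · exact hZ h
  · intro z hvz
    have hv0 : MvPolynomial.eval z (V 0) ≠ 0 := left_ne_zero_of_mul hvz
    have hv1 : MvPolynomial.eval z (V 1) ≠ 0 := right_ne_zero_of_mul hvz
    constructor
    · rintro ⟨lam, hlam, hEq⟩
      rw [hG] at hEq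
      have h0 := congrFun hEq 0
      have h1 := congrFun hEq 1
      have h2 := congrFun hEq 2
      simp [hUaff, hVaff] at h0 h1 h2
      constructor
      · field_simp
        have key : (ζ * MvPolynomial.eval z (V 0) + MvPolynomial.eval z (U 0)
            - z 0 * MvPolynomial.eval z (V 0)) * MvPolynomial.eval z (V 1) = 0 := by
          rw [← h0] at h1
          linear_combination h1
        rcases mul_eq_zero.mp key with h | h
        · linear_combination h
        · exact absurd h hv1
      · field_simp
        have key : ((starRingEnd ℂ) ζ * MvPolynomial.eval z (V 1) + MvPolynomial.eval z (U 1)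
            - z 1 * MvPolynomial.eval z (V 1)) * MvPolynomial.eval z (V 0) = 0 := by
          rw [← h0] at h2
          linear_combination h2
        rcases mul_eq_zero.mp key with h | h
        · linear_combination h
        · exact absurd h hv0
    · rintro ⟨h1, h2⟩
      field_simp at h1 h2
      refine ⟨MvPolynomial.eval z (V 0) * MvPolynomial.eval z (V 1), hvz, ?_⟩
      rw [hG]
      funext i
      fin_cases i
      · simp [hUaff, hVaff]
      · simp only [hUaff, hVaff]
        simp
        linear_combination h1 * MvPolynomial.eval z (V 1)
      · simp only [hUaff, hVaff]
        simp
        linear_combination h2 * MvPolynomial.eval z (V 0)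
end

section
/- Let σ₀ > 0 and y₁ ∈ ℝ with y₁² > 8σ₀, and let x₊ ≠ x₋ be the two real solutions of x + 2σ₀/x = y₁ (equivalently the roots of x² − y₁x + 2σ₀ = 0). Then x₊² ≠ 2σ₀ and x₋² ≠ 2σ₀, so both image magnifications μ± = 1/(1 − 2σ₀/x±²) are finite, and the magnification invariant holds: 1/(1 − 2σ₀/x₊²) + 1/(1 − 2σ₀/x₋²) = 1. -/
/-- **Real magnification invariant for the filament lens model.**
For `σ₀ > 0` and a source position `y₁` in the maximal domain `y₁² > 8σ₀`, the
two distinct real images `x₊ ≠ x₋` (roots of `x² − y₁x + 2σ₀ = 0`, equivalently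
`x + 2σ₀/x = y₁`) satisfy `x±² ≠ 2σ₀`, so both magnifications
`μ± = 1/(1 − 2σ₀/x±²)` are finite, and `μ₊ + μ₋ = 1`. -/
theorem filament_lens_magnification_invariant
    (σ₀ y₁ : ℝ) (hσ : 0 < σ₀) (hmax : y₁ ^ 2 > 8 * σ₀)
    (xp xm : ℝ) (hne : xp ≠ xm)
    (hxp : xp ^ 2 - y₁ * xp + 2 * σ₀ = 0)
    (hxm : xm ^ 2 - y₁ * xm + 2 * σ₀ = 0) :
    xp ^ 2 ≠ 2 * σ₀ ∧ xm ^ 2 ≠ 2 * σ₀ ∧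
      1 / (1 - 2 * σ₀ / xp ^ 2) + 1 / (1 - 2 * σ₀ / xm ^ 2) = 1 := by
  have hsub : xp ≠ xm := hne
  have hdm : xp - xm ≠ 0 := sub_ne_zero.mpr hne
  have hsum : xp + xm = y₁ := by
    have h0 : (xp - xm) * (xp + xm - y₁) = 0 := by linear_combination hxp - hxm
    have := (mul_eq_zero.mp h0).resolve_left hdm
    linarith [sub_eq_zero.mp this]
  have hprod : xp * xm = 2 * σ₀ := by linear_combination -hxp + xp * hsum
  have hxp0 : xp ≠ 0 := by
    intro h; rw [h, zero_mul] at hprod; linarith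
  have hxm0 : xm ≠ 0 := by
    intro h; rw [h, mul_zero] at hprod; linarith
  have h1 : xp ^ 2 ≠ 2 * σ₀ := by
    intro h
    have : xp * (xp - xm) = 0 := by linear_combination h - hprod
    exact hdm ((mul_eq_zero.mp this).resolve_left hxp0)
  have h2 : xm ^ 2 ≠ 2 * σ₀ := by
    intro h
    have : xm * (xm - xp) = 0 := by linear_combination h - hprod
    exact hdm (by linarith [(mul_eq_zero.mp this).resolve_left hxm0])
  refine ⟨h1, h2, ?_⟩
  have hdp : 1 - 2 * σ₀ / xp ^ 2 ≠ 0 := by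
    rw [sub_ne_zero]
    intro h
    exact h1 (by field_simp at h; linarith)
  have hdmm : 1 - 2 * σ₀ / xm ^ 2 ≠ 0 := by
    rw [sub_ne_zero]
    intro h
    exact h2 (by field_simp at h; linarith)
  have hp2 : xp ^ 2 - 2 * σ₀ ≠ 0 := sub_ne_zero.mpr h1
  have hm2 : xm ^ 2 - 2 * σ₀ ≠ 0 := sub_ne_zero.mpr h2
  have hA : 1 - 2 * σ₀ / xp ^ 2 = (xp ^ 2 - 2 * σ₀) / xp ^ 2 := by
    field_simp
  have hB : 1 - 2 * σ₀ / xm ^ 2 = (xm ^ 2 - 2 * σ₀) / xm ^ 2 := by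
    field_simp
  rw [hA, hB, one_div_div, one_div_div]
  rw [div_add_div _ _ hp2 hm2, div_eq_one_iff_eq (mul_ne_zero hp2 hm2)]
  linear_combination (xp * xm + 2 * σ₀) * hprod
end

section
/- Let σ₀ > 0 and ζ ∈ ℂ with (ζ + conj(ζ))² ≠ 32σ₀ (equivalently (Re ζ)² ≠ 8σ₀). Consider the rational lensing map f : {(z₁,z₂) ∈ ℂ² : z₁ + z₂ ≠ 0} → ℂ² given by f₁(z₁,z₂) = ζ − 4σ₀/(z₁ + z₂), f₂(z₁,z₂) = conj(ζ) − 4σ₀/(z₁ + z₂). Then f has exactly two fixed points q₁, q₂ in ℂ²; at each fixed point q = (z₁,z₂) the complex Jacobian satisfies det(I₂ − Df(q)) = 1 − 8σ₀/(z₁ + z₂)² ≠ 0; and the sum of the complex magnifications equals one: ∑_{i=1}^{2} 1/det(I₂ − Df(qᵢ)) = 1. -/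
/-!
Adding the two coordinates of the fixed-point equation shows that a fixed point is determined
by `s = z₁ + z₂`, which must be a root of `s² - (ζ + ζ̄) s + 8σ₀`; the discriminant hypothesis
gives two distinct roots `s₁, s₂` with `s₁ s₂ = 8σ₀`. All four partial derivatives equal
`4σ₀ / s²`, so `det (I₂ - Df) = 1 - s₁ s₂ / s²`, i.e. `(s₁ - s₂) / s₁` and `(s₂ - s₁) / s₂` at the
two images, and the reciprocals of these sum to one.
-/

theorem exists_ne_add_eq_mul_eq_of_discrim_ne_zero {K : Type*} [Field K] [IsAlgClosed K]
    [NeZero (2 : K)] {a p : K} (h : a ^ 2 - 4 * p ≠ 0) :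
    ∃ s₁ s₂ : K, s₁ ≠ s₂ ∧ s₁ + s₂ = a ∧ s₁ * s₂ = p := by
  obtain ⟨r, hr⟩ := IsAlgClosed.exists_pow_nat_eq (a ^ 2 - 4 * p) two_pos
  have hr0 : r ≠ 0 := by rintro rfl; exact h (by simpa using hr.symm)
  have h2 : (2 : K) ≠ 0 := two_ne_zero
  refine ⟨(a + r) / 2, (a - r) / 2, fun heq => hr0 ?_, by field_simp; ring, ?_⟩
  · field_simp at heq
    exact (mul_eq_zero.mp (by linear_combination heq : 2 * r = 0)).resolve_left h2
  · field_simp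
    linear_combination -hr

theorem div_sub_add_div_sub_eq_one {K : Type*} [Field K] {a b : K} (h : a ≠ b) :
    a / (a - b) + b / (b - a) = 1 := by
  have hab : a - b ≠ 0 := sub_ne_zero.mpr h
  rw [← neg_sub a b, div_neg, ← sub_eq_add_neg, ← sub_div, div_self hab]

theorem one_sub_mul_div_sq_self {K : Type*} [Field K] {a b : K} (ha : a ≠ 0) :
    1 - a * b / a ^ 2 = (a - b) / a := by
  field_simp

theorem Matrix.det_one_sub_of_const_fin_two {R : Type*} [CommRing R] (k : R) :
    (1 - !![k, k; k, k]).det = 1 - 2 * k := by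
  rw [Matrix.one_fin_two, Matrix.det_fin_two]
  simp only [Matrix.sub_apply, Matrix.of_apply, Matrix.cons_val', Matrix.cons_val_zero,
    Matrix.cons_val_one, Matrix.cons_val_fin_one]
  ring

section FixedPoints

variable {K : Type*} [Field K] (ζ₁ ζ₂ c : K)

def filamentPoint (s : K) : K × K := (ζ₁ - c / s, ζ₂ - c / s)

variable {ζ₁ ζ₂ c}

theorem filamentPoint_injective (hc : c ≠ 0) : Function.Injective (filamentPoint ζ₁ ζ₂ c) :=
  fun _ _ h => inv_injective <| mul_left_cancel₀ hc <| by
    simpa [filamentPoint, div_eq_mul_inv] using congrArg Prod.fst h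

theorem filamentPoint_fst_add_snd_eq_self_iff {s₁ s₂ s : K} (hsum : s₁ + s₂ = ζ₁ + ζ₂)
    (hprod : s₁ * s₂ = 2 * c) (hs : s ≠ 0) :
    (filamentPoint ζ₁ ζ₂ c s).1 + (filamentPoint ζ₁ ζ₂ c s).2 = s ↔ s = s₁ ∨ s = s₂ := by
  have hquad : (filamentPoint ζ₁ ζ₂ c s).1 + (filamentPoint ζ₁ ζ₂ c s).2 - s
      = -((s - s₁) * (s - s₂)) / s := by
    simp only [filamentPoint]
    field_simp
    linear_combination -s * hsum + hprod
  rw [← sub_eq_zero, hquad, neg_div, neg_eq_zero, div_eq_zero_iff, or_iff_left hs,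
    mul_eq_zero, sub_eq_zero, sub_eq_zero]

theorem setOf_filamentPoint_fixed_eq {s₁ s₂ : K} (hsum : s₁ + s₂ = ζ₁ + ζ₂)
    (hprod : s₁ * s₂ = 2 * c) (hs₁ : s₁ ≠ 0) (hs₂ : s₂ ≠ 0) :
    {q : K × K | q.1 + q.2 ≠ 0 ∧ filamentPoint ζ₁ ζ₂ c (q.1 + q.2) = q} =
      {filamentPoint ζ₁ ζ₂ c s₁, filamentPoint ζ₁ ζ₂ c s₂} := by
  ext q
  simp only [Set.mem_ofPred_eq, Set.mem_insert_iff, Set.mem_singleton_iff]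
  constructor
  · rintro ⟨hq, hfix⟩
    rcases (filamentPoint_fst_add_snd_eq_self_iff hsum hprod hq).mp (by rw [hfix]) with h | h
    · exact .inl (by rw [← hfix, h])
    · exact .inr (by rw [← hfix, h])
  · rintro (rfl | rfl)
    · have hP := (filamentPoint_fst_add_snd_eq_self_iff hsum hprod hs₁).mpr (.inl rfl)
      exact ⟨by rwa [hP], by rw [hP]⟩
    · have hP := (filamentPoint_fst_add_snd_eq_self_iff hsum hprod hs₂).mpr (.inr rfl)
      exact ⟨by rwa [hP], by rw [hP]⟩

end FixedPoints

section Jacobian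

variable {𝕜 : Type*} [NontriviallyNormedField 𝕜]

noncomputable def partialJacobian (f : 𝕜 × 𝕜 → 𝕜 × 𝕜) (q : 𝕜 × 𝕜) : Matrix (Fin 2) (Fin 2) 𝕜 :=
  !![deriv (fun t => (f (t, q.2)).1) q.1, deriv (fun t => (f (q.1, t)).1) q.2;
     deriv (fun t => (f (t, q.2)).2) q.1, deriv (fun t => (f (q.1, t)).2) q.2]

theorem deriv_eq_of_forall_eq_sub_div_add {g : 𝕜 → 𝕜} {w c d x : 𝕜}
    (hg : ∀ t, t + d ≠ 0 → g t = w - c / (t + d)) (hx : x + d ≠ 0) :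
    deriv g x = c / (x + d) ^ 2 := by
  have hderiv : HasDerivAt (fun t => w - c / (t + d)) (c / (x + d) ^ 2) x := by
    have h := ((((hasDerivAt_id' x).add_const d).inv hx).const_mul c).const_sub w
    simp only [div_eq_mul_inv]
    exact h.congr_deriv (by ring)
  have hev : g =ᶠ[nhds x] fun t => w - c / (t + d) :=
    ((continuous_add_const d).continuousAt.eventually_ne hx).mono hg
  rw [hev.deriv_eq, hderiv.deriv]

theorem partialJacobian_eq_of_forall_eq_filamentPoint {ζ₁ ζ₂ c : 𝕜} {f : 𝕜 × 𝕜 → 𝕜 × 𝕜}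
    (hf : ∀ z : 𝕜 × 𝕜, z.1 + z.2 ≠ 0 → f z = filamentPoint ζ₁ ζ₂ c (z.1 + z.2))
    {q : 𝕜 × 𝕜} (hq : q.1 + q.2 ≠ 0) :
    partialJacobian f q = let k := c / (q.1 + q.2) ^ 2; !![k, k; k, k] := by
  have hq' : q.2 + q.1 ≠ 0 := by rwa [add_comm]
  have hf' : ∀ t, t + q.1 ≠ 0 → f (q.1, t) = filamentPoint ζ₁ ζ₂ c (t + q.1) := fun t ht => by
    rw [hf _ (by rwa [add_comm]), add_comm]
  simp only [partialJacobian]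
  rw [deriv_eq_of_forall_eq_sub_div_add (fun t ht => congrArg Prod.fst (hf (t, q.2) ht)) hq,
    deriv_eq_of_forall_eq_sub_div_add (fun t ht => congrArg Prod.snd (hf (t, q.2) ht)) hq,
    deriv_eq_of_forall_eq_sub_div_add (fun t ht => congrArg Prod.fst (hf' t ht)) hq',
    deriv_eq_of_forall_eq_sub_div_add (fun t ht => congrArg Prod.snd (hf' t ht)) hq',
    add_comm q.2]

theorem det_one_sub_partialJacobian {ζ₁ ζ₂ c : 𝕜} {f : 𝕜 × 𝕜 → 𝕜 × 𝕜}
    (hf : ∀ z : 𝕜 × 𝕜, z.1 + z.2 ≠ 0 → f z = filamentPoint ζ₁ ζ₂ c (z.1 + z.2))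
    {q : 𝕜 × 𝕜} (hq : q.1 + q.2 ≠ 0) :
    (1 - partialJacobian f q).det = 1 - 2 * c / (q.1 + q.2) ^ 2 := by
  rw [partialJacobian_eq_of_forall_eq_filamentPoint hf hq, Matrix.det_one_sub_of_const_fin_two,
    mul_div_assoc]

theorem det_one_sub_partialJacobian_filamentPoint {ζ₁ ζ₂ c s₁ s₂ : 𝕜} {f : 𝕜 × 𝕜 → 𝕜 × 𝕜}
    (hf : ∀ z : 𝕜 × 𝕜, z.1 + z.2 ≠ 0 → f z = filamentPoint ζ₁ ζ₂ c (z.1 + z.2))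
    (hsum : s₁ + s₂ = ζ₁ + ζ₂) (hprod : s₁ * s₂ = 2 * c) (hs₁ : s₁ ≠ 0) :
    (1 - partialJacobian f (filamentPoint ζ₁ ζ₂ c s₁)).det = (s₁ - s₂) / s₁ := by
  have hP := (filamentPoint_fst_add_snd_eq_self_iff hsum hprod hs₁).mpr (.inl rfl)
  rw [det_one_sub_partialJacobian hf (by rwa [hP]), hP, ← hprod, one_sub_mul_div_sq_self hs₁]

end Jacobian

/-- **Complex magnification invariant for the filament lens model** (the paper's Example).
Let `σ₀ > 0` and `ζ ∈ ℂ` with `(ζ + conj ζ)² ≠ 32σ₀`.  The rational lensing map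
`f(z₁, z₂) = (ζ − 4σ₀/(z₁+z₂), conj ζ − 4σ₀/(z₁+z₂))` (defined where `z₁+z₂ ≠ 0`)
has exactly two fixed points `q₁ ≠ q₂`; at each fixed point `q` the complex
Jacobian matrix `Df q = (∂fμ/∂zν)(q)` satisfies
`det(I₂ − Df q) = 1 − 8σ₀/(q₁+q₂)² ≠ 0`; and the complex magnifications sum to
one: `1/det(I₂ − Df q₁) + 1/det(I₂ − Df q₂) = 1`. -/
theorem filament_lens_complex_magnification_invariant
    (σ₀ : ℝ) (hσ : 0 < σ₀) (ζ : ℂ)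
    (hζ : (ζ + (starRingEnd ℂ) ζ) ^ 2 ≠ (32 * σ₀ : ℂ))
    (f : ℂ × ℂ → ℂ × ℂ)
    (hf : ∀ z : ℂ × ℂ, z.1 + z.2 ≠ 0 →
      f z = (ζ - 4 * σ₀ / (z.1 + z.2), (starRingEnd ℂ) ζ - 4 * σ₀ / (z.1 + z.2)))
    (Df : ℂ × ℂ → Matrix (Fin 2) (Fin 2) ℂ)
    (hDf : ∀ q : ℂ × ℂ, Df q =
      !![deriv (fun t => (f (t, q.2)).1) q.1, deriv (fun t => (f (q.1, t)).1) q.2;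
         deriv (fun t => (f (t, q.2)).2) q.1, deriv (fun t => (f (q.1, t)).2) q.2]) :
    ∃ q₁ q₂ : ℂ × ℂ, q₁ ≠ q₂ ∧
      {q : ℂ × ℂ | q.1 + q.2 ≠ 0 ∧ f q = q} = {q₁, q₂} ∧
      (∀ q ∈ {q : ℂ × ℂ | q.1 + q.2 ≠ 0 ∧ f q = q},
        Matrix.det (1 - Df q) = 1 - 8 * σ₀ / (q.1 + q.2) ^ 2 ∧
          Matrix.det (1 - Df q) ≠ 0) ∧
      1 / Matrix.det (1 - Df q₁) + 1 / Matrix.det (1 - Df q₂) = 1 := by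
  set P := filamentPoint ζ (starRingEnd ℂ ζ) (4 * σ₀ : ℂ)
  have hDf' : ∀ q, Df q = partialJacobian f q := hDf
  have hc : 2 * (4 * σ₀ : ℂ) ≠ 0 := by simp [hσ.ne']
  obtain ⟨s₁, s₂, hne, hsum, hprod⟩ := exists_ne_add_eq_mul_eq_of_discrim_ne_zero
    (a := ζ + starRingEnd ℂ ζ) (p := 2 * (4 * σ₀ : ℂ)) fun h => hζ (by linear_combination h)
  have hs₁ : s₁ ≠ 0 := left_ne_zero_of_mul (hprod ▸ hc)
  have hs₂ : s₂ ≠ 0 := right_ne_zero_of_mul (hprod ▸ hc)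
  have hμ₁ : (1 - Df (P s₁)).det = (s₁ - s₂) / s₁ := by
    rw [hDf']; exact det_one_sub_partialJacobian_filamentPoint hf hsum hprod hs₁
  have hμ₂ : (1 - Df (P s₂)).det = (s₂ - s₁) / s₂ := by
    rw [hDf']
    exact det_one_sub_partialJacobian_filamentPoint hf ((add_comm _ _).trans hsum)
      ((mul_comm _ _).trans hprod) hs₂
  have hfixed : {q : ℂ × ℂ | q.1 + q.2 ≠ 0 ∧ f q = q} = {P s₁, P s₂} := by
    rw [← setOf_filamentPoint_fixed_eq hsum hprod hs₁ hs₂]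
    exact Set.ext fun q => and_congr_right fun hq => by rw [hf q hq]; rfl
  refine ⟨P s₁, P s₂, (filamentPoint_injective (right_ne_zero_of_mul hc)).ne hne, hfixed,
    fun q hq => ⟨?_, ?_⟩, ?_⟩
  · rw [hDf', det_one_sub_partialJacobian hf hq.1]
    ring
  · rw [hfixed] at hq
    rcases hq with rfl | rfl
    · exact hμ₁ ▸ div_ne_zero (sub_ne_zero.mpr hne) hs₁
    · exact hμ₂ ▸ div_ne_zero (sub_ne_zero.mpr hne.symm) hs₂
  · rw [hμ₁, hμ₂, one_div_div, one_div_div]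
    exact div_sub_add_div_sub_eq_one hne
end
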